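/- arXiv:2002.00816 — 4 statements merged into one kernel-verified Lean document; each statement's English description precedes it below -/
import Mathlib

section
/- Let Z_0,...,Z_J be nonnegative reals bounded by C_Z, and let h_{1,0},...,h_{1,J} and h_{2,0},...,h_{2,J} take values in [0,1]. Define T = Σ_{j=0}^J Z_j h_{1,j} ∏_{l=0}^{j−1}(1−h_{1,l}) − Σ_{j=0}^J Z_j h_{2,j} ∏_{l=0}^{j−1}(1−h_{2,l}). Then |T| ≤ C_Z Σ_{j=0}^{J−1} |h_{1,j} − h_{2,j}| ∏_{l=0}^{j−1}(1−h_{2,l}), provided h_{1,J} = h_{2,J} = 1. -/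
open Finset

/-!
Read `h j` as the probability of stopping at step `j` given survival so far; then
`h j * ∏ l < j, (1 - h l)` is the probability of stopping exactly at `j`, and each sum in the
theorem is an expected reward, which lies in `[0, C_Z]`. Conditioning on the first step gives
`S(h) = Z 0 * h 0 + (1 - h 0) * S(shifted h)`, so the difference of two such rewards splits as
`(h₁ 0 - h₂ 0) * (Z 0 - S₁') + (1 - h₂ 0) * (S₁' - S₂')`. The first term is bounded by
`C_Z * |h₁ 0 - h₂ 0|` and the second by induction on `J`; the base case is `h₁ J = h₂ J = 1`.
-/

section Survival

variable {R : Type*} [CommRing R]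

theorem sum_range_mul_prod_one_sub (h : ℕ → R) (n : ℕ) :
    ∑ j ∈ range n, h j * ∏ l ∈ range j, (1 - h l) = 1 - ∏ l ∈ range n, (1 - h l) := by
  induction n with
  | zero => simp
  | succ n ih => rw [sum_range_succ, prod_range_succ, ih]; ring

theorem sum_range_succ_mul_prod_one_sub (f h : ℕ → R) (n : ℕ) :
    ∑ j ∈ range (n + 1), f j * ∏ l ∈ range j, (1 - h l) =
      f 0 + (1 - h 0) * ∑ j ∈ range n, f (j + 1) * ∏ l ∈ range j, (1 - h (l + 1)) := by
  rw [sum_range_succ', mul_sum, prod_range_zero, mul_one, add_comm]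
  congr 1
  refine sum_congr rfl fun j _ => ?_
  rw [prod_range_succ']
  ring

end Survival

theorem prod_range_one_sub_nonneg {h : ℕ → ℝ} {n : ℕ} (hh : ∀ j < n, h j ≤ 1) :
    0 ≤ ∏ l ∈ range n, (1 - h l) :=
  prod_nonneg fun l hl => sub_nonneg.2 (hh l (mem_range.1 hl))

theorem sum_range_mul_mul_prod_one_sub_mem_Icc {C : ℝ} {Z h : ℕ → ℝ} {n : ℕ} (hC : 0 ≤ C)
    (hZ : ∀ j < n, 0 ≤ Z j ∧ Z j ≤ C) (hh : ∀ j < n, h j ∈ Set.Icc (0 : ℝ) 1) :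
    ∑ j ∈ range n, Z j * h j * ∏ l ∈ range j, (1 - h l) ∈ Set.Icc 0 C := by
  have hsurv : 0 ≤ ∏ l ∈ range n, (1 - h l) := prod_range_one_sub_nonneg fun l hl => (hh l hl).2
  have hw : ∀ j ∈ range n, 0 ≤ h j * ∏ l ∈ range j, (1 - h l) := fun j hj =>
    mul_nonneg (hh j (mem_range.1 hj)).1
      (prod_range_one_sub_nonneg fun l hl => (hh l (hl.trans (mem_range.1 hj))).2)
  simp only [mul_assoc]
  constructor
  · exact sum_nonneg fun j hj => mul_nonneg (hZ j (mem_range.1 hj)).1 (hw j hj)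
  · calc ∑ j ∈ range n, Z j * (h j * ∏ l ∈ range j, (1 - h l))
        ≤ ∑ j ∈ range n, C * (h j * ∏ l ∈ range j, (1 - h l)) :=
          sum_le_sum fun j hj => mul_le_mul_of_nonneg_right (hZ j (mem_range.1 hj)).2 (hw j hj)
      _ = C * (1 - ∏ l ∈ range n, (1 - h l)) := by rw [← mul_sum, sum_range_mul_prod_one_sub]
      _ ≤ C := mul_le_of_le_one_right hC (sub_le_self _ hsurv)

theorem abs_mul_add_one_sub_mul_sub_le {C a b z s₁ s₂ r : ℝ} (hb : b ≤ 1)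
    (hz : 0 ≤ z ∧ z ≤ C) (hs₁ : s₁ ∈ Set.Icc 0 C) (hs : |s₁ - s₂| ≤ C * r) :
    |(z * a + (1 - a) * s₁) - (z * b + (1 - b) * s₂)| ≤ C * (|a - b| + (1 - b) * r) := by
  have hzs : |z - s₁| ≤ C := abs_sub_le_iff.2 ⟨by linarith [hs₁.1], by linarith [hs₁.2, hz.1]⟩
  calc |(z * a + (1 - a) * s₁) - (z * b + (1 - b) * s₂)|
      = |(a - b) * (z - s₁) + (1 - b) * (s₁ - s₂)| := by ring_nf
    _ ≤ |a - b| * |z - s₁| + (1 - b) * |s₁ - s₂| := by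
        grw [abs_add_le, abs_mul, abs_mul, abs_of_nonneg (sub_nonneg.2 hb)]
    _ ≤ |a - b| * C + (1 - b) * (C * r) := by gcongr
    _ = C * (|a - b| + (1 - b) * r) := by ring

/-- Bound on the difference of randomized-stopping reward sums (Lemma `Delta-d`, pointwise
version): with `0 ≤ Z j ≤ C_Z`, `h i j ∈ [0,1]`, `h 1 J = h 2 J = 1`, and
`T = Σ_{j=0}^J Z j · h1 j · ∏_{l<j}(1−h1 l) − Σ_{j=0}^J Z j · h2 j · ∏_{l<j}(1−h2 l)`,
one has `|T| ≤ C_Z Σ_{j=0}^{J−1} |h1 j − h2 j| ∏_{l<j}(1−h2 l)`. -/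
theorem stmt_1 (J : ℕ) (CZ : ℝ) (Z h₁ h₂ : ℕ → ℝ)
    (hZ : ∀ j ≤ J, 0 ≤ Z j ∧ Z j ≤ CZ)
    (hh₁ : ∀ j ≤ J, h₁ j ∈ Set.Icc (0 : ℝ) 1)
    (hh₂ : ∀ j ≤ J, h₂ j ∈ Set.Icc (0 : ℝ) 1)
    (hJ₁ : h₁ J = 1) (hJ₂ : h₂ J = 1) :
    |(∑ j ∈ range (J + 1), Z j * h₁ j * ∏ l ∈ range j, (1 - h₁ l)) -
        ∑ j ∈ range (J + 1), Z j * h₂ j * ∏ l ∈ range j, (1 - h₂ l)| ≤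
      CZ * ∑ j ∈ range J, |h₁ j - h₂ j| * ∏ l ∈ range j, (1 - h₂ l) := by
  induction J generalizing Z h₁ h₂ with
  | zero => simp [hJ₁, hJ₂]
  | succ J ih =>
    have hZ₀ := hZ 0 J.succ.zero_le
    have htail := ih (fun j => Z (j + 1)) (fun j => h₁ (j + 1)) (fun j => h₂ (j + 1))
      (fun j hj => hZ _ (by omega)) (fun j hj => hh₁ _ (by omega)) (fun j hj => hh₂ _ (by omega))
      hJ₁ hJ₂
    rw [sum_range_succ_mul_prod_one_sub (fun j => Z j * h₁ j),
      sum_range_succ_mul_prod_one_sub (fun j => Z j * h₂ j),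
      sum_range_succ_mul_prod_one_sub (fun j => |h₁ j - h₂ j|)]
    exact abs_mul_add_one_sub_mul_sub_le (hh₂ 0 J.succ.zero_le).2 hZ₀
      (sum_range_mul_mul_prod_one_sub_mem_Icc (hZ₀.1.trans hZ₀.2)
        (fun j hj => hZ _ (by omega)) (fun j hj => hh₁ _ (by omega))) htail
end

section
/- Let X_0,...,X_J be random variables in ℝ^d on a probability space, Z_j = G_j(X_j) with 0 ≤ G_j ≤ C_Z measurable, and for vector functions h = (h_0,...,h_{J−1}) with values in [0,1] define Δ_X(h_1,h_2) = sqrt(E[| Σ_{j=0}^J Z_j p_j(h_1) − Σ_{j=0}^J Z_j p_j(h_2) |²]) where p_j(h) = h_j(X_j)∏_{l=0}^{j−1}(1−h_l(X_l)) (with h_J ≡ 1), and d_X(h_1,h_2) = sqrt(E[| Σ_{j=0}^{J−1} |h_{1,j}(X_j) − h_{2,j}(X_j)| ∏_{l=0}^{j−1}(1−h_{2,l}(X_l)) |²]). Then Δ_X(h_1,h_2) ≤ C_Z · d_X(h_1,h_2). -/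
open Finset MeasureTheory

/-
Writing `p_j(a) = a_j ∏_{l<j} (1 - a_l)`, the payoff `Σ_j z_j p_j(a)` satisfies the first-step
recursion `S(a) = z₀ a₀ + (1 - a₀) S(a ∘ succ)`. Hence
`S(a) - S(b) = (a₀ - b₀)(z₀ - S(a ∘ succ)) + (1 - b₀)(S(a ∘ succ) - S(b ∘ succ))`,
and since payoffs lie in `[0, C]`, induction gives `|S(a) - S(b)| ≤ C Σ_j |a_j - b_j| ∏_{l<j} (1 - b_l)`
pointwise; squaring and integrating gives the `L²` bound.
-/

/-- Expected payoff of the randomized stopping rule that, not having stopped before step `j`,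
stops there with probability `a j`. -/
def stopPayoff (z a : ℕ → ℝ) (n : ℕ) : ℝ :=
  ∑ j ∈ range n, z j * a j * ∏ l ∈ range j, (1 - a l)

def stopGap (a b : ℕ → ℝ) (n : ℕ) : ℝ :=
  ∑ j ∈ range n, |a j - b j| * ∏ l ∈ range j, (1 - b l)

lemma stopPayoff_succ (z a : ℕ → ℝ) (n : ℕ) :
    stopPayoff z a (n + 1) =
      z 0 * a 0 + (1 - a 0) * stopPayoff (fun j => z (j + 1)) (fun j => a (j + 1)) n := by
  simp only [stopPayoff, sum_range_succ', prod_range_succ', prod_range_zero, mul_one, mul_sum]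
  rw [add_comm]
  congr 1
  exact sum_congr rfl fun j _ => by ring

lemma stopGap_succ (a b : ℕ → ℝ) (n : ℕ) :
    stopGap a b (n + 1) =
      |a 0 - b 0| + (1 - b 0) * stopGap (fun j => a (j + 1)) (fun j => b (j + 1)) n := by
  simp only [stopGap, sum_range_succ', prod_range_succ', prod_range_zero, mul_one, mul_sum]
  rw [add_comm]
  congr 1
  exact sum_congr rfl fun j _ => by ring

lemma stopGap_succ_of_eq {a b : ℕ → ℝ} {n : ℕ} (h : a n = b n) :
    stopGap a b (n + 1) = stopGap a b n := by
  simp [stopGap, sum_range_succ, h]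

section Bounds

variable {C : ℝ} {z a b : ℕ → ℝ}

lemma stopPayoff_mem_Icc (hz : ∀ j, z j ∈ Set.Icc 0 C) (ha : ∀ j, a j ∈ Set.Icc (0 : ℝ) 1)
    (n : ℕ) : stopPayoff z a n ∈ Set.Icc 0 C := by
  induction n generalizing z a with
  | zero => simpa [stopPayoff] using (hz 0).1.trans (hz 0).2
  | succ n ih =>
    obtain ⟨hS₀, hS₁⟩ := ih (fun j => hz (j + 1)) (fun j => ha (j + 1))
    obtain ⟨hz₀, hz₁⟩ := hz 0
    obtain ⟨ha₀, ha₁⟩ := ha 0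
    rw [stopPayoff_succ]
    constructor <;> nlinarith

lemma stopGap_nonneg (hb : ∀ j, b j ≤ 1) (n : ℕ) : 0 ≤ stopGap a b n :=
  sum_nonneg fun _ _ => mul_nonneg (abs_nonneg _) (prod_nonneg fun l _ => sub_nonneg.2 (hb l))

lemma stopGap_le (ha : ∀ j, a j ∈ Set.Icc (0 : ℝ) 1) (hb : ∀ j, b j ∈ Set.Icc (0 : ℝ) 1)
    (n : ℕ) : stopGap a b n ≤ n := by
  refine (sum_le_card_nsmul _ _ 1 fun j _ => ?_).trans (by simp)
  refine mul_le_one₀ ?_ (prod_nonneg fun l _ => sub_nonneg.2 (hb l).2)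
    (prod_le_one (fun l _ => sub_nonneg.2 (hb l).2) fun l _ => by linarith [(hb l).1])
  rw [abs_le]
  constructor <;> linarith [(ha j).1, (ha j).2, (hb j).1, (hb j).2]

lemma abs_stopPayoff_sub_le (hz : ∀ j, z j ∈ Set.Icc 0 C)
    (ha : ∀ j, a j ∈ Set.Icc (0 : ℝ) 1) (hb : ∀ j, b j ∈ Set.Icc (0 : ℝ) 1) (n : ℕ) :
    |stopPayoff z a n - stopPayoff z b n| ≤ C * stopGap a b n := by
  induction n generalizing z a b with
  | zero => simp [stopPayoff, stopGap]
  | succ n ih =>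
    set z' := fun j => z (j + 1)
    set a' := fun j => a (j + 1)
    set b' := fun j => b (j + 1)
    have hz' : ∀ j, z' j ∈ Set.Icc 0 C := fun j => hz (j + 1)
    have ha' : ∀ j, a' j ∈ Set.Icc (0 : ℝ) 1 := fun j => ha (j + 1)
    have hb' : ∀ j, b' j ∈ Set.Icc (0 : ℝ) 1 := fun j => hb (j + 1)
    have hdiff : |z 0 - stopPayoff z' a' n| ≤ C := by
      obtain ⟨hS₀, hS₁⟩ := stopPayoff_mem_Icc hz' ha' n
      rw [abs_le]
      constructor <;> linarith [(hz 0).1, (hz 0).2]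
    have hb₀ : 0 ≤ 1 - b 0 := sub_nonneg.2 (hb 0).2
    rw [stopPayoff_succ, stopPayoff_succ, stopGap_succ]
    calc |z 0 * a 0 + (1 - a 0) * stopPayoff z' a' n - (z 0 * b 0 + (1 - b 0) * stopPayoff z' b' n)|
        = |(a 0 - b 0) * (z 0 - stopPayoff z' a' n) +
            (1 - b 0) * (stopPayoff z' a' n - stopPayoff z' b' n)| := by ring_nf
      _ ≤ |a 0 - b 0| * C + (1 - b 0) * (C * stopGap a' b' n) := by
        refine (abs_add_le _ _).trans (add_le_add ?_ ?_)
        · rw [abs_mul]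
          exact mul_le_mul_of_nonneg_left hdiff (abs_nonneg _)
        · rw [abs_mul, abs_of_nonneg hb₀]
          exact mul_le_mul_of_nonneg_left (ih hz' ha' hb') hb₀
      _ = C * (|a 0 - b 0| + (1 - b 0) * stopGap a' b' n) := by ring

end Bounds

lemma sqrt_integral_sq_le_mul {Ω : Type*} [MeasurableSpace Ω] {μ : Measure Ω} {f g : Ω → ℝ}
    {C : ℝ} (hC : 0 ≤ C) (hg : Integrable (fun ω => |g ω| ^ 2) μ)
    (hfg : ∀ᵐ ω ∂μ, |f ω| ≤ C * g ω) :
    Real.sqrt (∫ ω, |f ω| ^ 2 ∂μ) ≤ C * Real.sqrt (∫ ω, |g ω| ^ 2 ∂μ) := by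
  have hsq : ∀ᵐ ω ∂μ, |f ω| ^ 2 ≤ C ^ 2 * |g ω| ^ 2 := by
    filter_upwards [hfg] with ω h
    rw [← mul_pow, ← abs_of_nonneg hC, ← abs_mul]
    exact pow_le_pow_left₀ (abs_nonneg _) (h.trans (le_abs_self _)) 2
  calc Real.sqrt (∫ ω, |f ω| ^ 2 ∂μ)
      ≤ Real.sqrt (∫ ω, C ^ 2 * |g ω| ^ 2 ∂μ) :=
        Real.sqrt_le_sqrt <| integral_mono_of_nonneg (ae_of_all _ fun _ => by positivity)
          (hg.const_mul _) hsq
    _ = C * Real.sqrt (∫ ω, |g ω| ^ 2 ∂μ) := by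
        rw [integral_const_mul, Real.sqrt_mul (sq_nonneg C), Real.sqrt_sq hC]

theorem stmt_2_general {Ω : Type*} [MeasurableSpace Ω] (μ : Measure Ω) [IsProbabilityMeasure μ]
    (d J : ℕ) (X : ℕ → Ω → (Fin d → ℝ)) (hX : ∀ j, Measurable (X j))
    (CZ : ℝ) (G : ℕ → (Fin d → ℝ) → ℝ)
    (hG : ∀ j x, 0 ≤ G j x ∧ G j x ≤ CZ)
    (h₁ h₂ : ℕ → (Fin d → ℝ) → ℝ)
    (hmeas₁ : ∀ j, Measurable (h₁ j)) (hmeas₂ : ∀ j, Measurable (h₂ j))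
    (hval₁ : ∀ j x, h₁ j x ∈ Set.Icc (0 : ℝ) 1)
    (hval₂ : ∀ j x, h₂ j x ∈ Set.Icc (0 : ℝ) 1)
    (hJ₁ : ∀ x, h₁ J x = 1) (hJ₂ : ∀ x, h₂ J x = 1) :
    Real.sqrt (∫ ω,
        |(∑ j ∈ range (J + 1),
              G j (X j ω) * h₁ j (X j ω) * ∏ l ∈ range j, (1 - h₁ l (X l ω))) -
            ∑ j ∈ range (J + 1),
              G j (X j ω) * h₂ j (X j ω) * ∏ l ∈ range j, (1 - h₂ l (X l ω))| ^ 2 ∂μ) ≤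
      CZ * Real.sqrt (∫ ω,
        |∑ j ∈ range J,
            |h₁ j (X j ω) - h₂ j (X j ω)| * ∏ l ∈ range j, (1 - h₂ l (X l ω))| ^ 2 ∂μ) := by
  have hCZ : 0 ≤ CZ := (hG 0 0).1.trans (hG 0 0).2
  set a : Ω → ℕ → ℝ := fun ω j => h₁ j (X j ω)
  set b : Ω → ℕ → ℝ := fun ω j => h₂ j (X j ω)
  have ha (ω : Ω) (j : ℕ) : a ω j ∈ Set.Icc 0 1 := hval₁ j _
  have hb (ω : Ω) (j : ℕ) : b ω j ∈ Set.Icc 0 1 := hval₂ j _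
  have hgap_meas : Measurable fun ω => stopGap (a ω) (b ω) J := by
    unfold stopGap
    fun_prop
  refine sqrt_integral_sq_le_mul (g := fun ω => stopGap (a ω) (b ω) J) hCZ ?_
    (ae_of_all _ fun ω => ?_)
  · refine .of_bound (hgap_meas.abs.pow_const 2).aestronglyMeasurable ((J : ℝ) ^ 2)
      (ae_of_all _ fun ω => ?_)
    have hnn : 0 ≤ stopGap (a ω) (b ω) J := stopGap_nonneg (fun j => (hb ω j).2) J
    rw [Real.norm_eq_abs, abs_pow, abs_abs, abs_of_nonneg hnn]
    exact pow_le_pow_left₀ hnn (stopGap_le (ha ω) (hb ω) J) 2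
  · rw [← stopGap_succ_of_eq ((hJ₁ _).trans (hJ₂ _).symm)]
    exact abs_stopPayoff_sub_le (fun j => hG j (X j ω)) (ha ω) (hb ω) (J + 1)

/-- Lemma `Delta-d`: with `Z_j = G_j(X_j)`, `0 ≤ G_j ≤ C_Z`,
`p_j(h) = h_j(X_j) ∏_{l<j} (1 − h_l(X_l))` (with `h_J ≡ 1`),
`Δ_X(h₁,h₂) = sqrt(E[|Σ_j Z_j p_j(h₁) − Σ_j Z_j p_j(h₂)|²])` and
`d_X(h₁,h₂) = sqrt(E[|Σ_{j<J} |h₁,j(X_j) − h₂,j(X_j)| ∏_{l<j}(1−h₂,l(X_l))|²])`,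
one has `Δ_X(h₁,h₂) ≤ C_Z · d_X(h₁,h₂)`. -/
theorem stmt_2 {Ω : Type*} [MeasurableSpace Ω] (μ : Measure Ω) [IsProbabilityMeasure μ]
    (d J : ℕ) (X : ℕ → Ω → (Fin d → ℝ)) (hX : ∀ j, Measurable (X j))
    (CZ : ℝ) (G : ℕ → (Fin d → ℝ) → ℝ)
    (hGmeas : ∀ j, Measurable (G j)) (hG : ∀ j x, 0 ≤ G j x ∧ G j x ≤ CZ)
    (h₁ h₂ : ℕ → (Fin d → ℝ) → ℝ)
    (hmeas₁ : ∀ j, Measurable (h₁ j)) (hmeas₂ : ∀ j, Measurable (h₂ j))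
    (hval₁ : ∀ j x, h₁ j x ∈ Set.Icc (0 : ℝ) 1)
    (hval₂ : ∀ j x, h₂ j x ∈ Set.Icc (0 : ℝ) 1)
    (hJ₁ : ∀ x, h₁ J x = 1) (hJ₂ : ∀ x, h₂ J x = 1) :
    Real.sqrt (∫ ω,
        |(∑ j ∈ range (J + 1),
              G j (X j ω) * h₁ j (X j ω) * ∏ l ∈ range j, (1 - h₁ l (X l ω))) -
            ∑ j ∈ range (J + 1),
              G j (X j ω) * h₂ j (X j ω) * ∏ l ∈ range j, (1 - h₂ l (X l ω))| ^ 2 ∂μ) ≤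
      CZ * Real.sqrt (∫ ω,
        |∑ j ∈ range J,
            |h₁ j (X j ω) - h₂ j (X j ω)| * ∏ l ∈ range j, (1 - h₂ l (X l ω))| ^ 2 ∂μ) :=
  stmt_2_general μ d J X hX CZ G hG h₁ h₂ hmeas₁ hmeas₂ hval₁ hval₂ hJ₁ hJ₂
end

section
/- Let (Ω,F,P) be a probability space with a filtration (F_j)_{j=0}^J, X_j Markov-chain values in ℝ^d adapted, Z_j = G_j(X_j) with G_j ≥ 0 bounded, and define Q_{k−1}(h_{k−1},...,h_J) = E[ Σ_{j=k−1}^J Z_j h_j(X_j) ∏_{l=k−1}^{j−1}(1 − h_l(X_l)) ] for [0,1]-valued measurable functions h_j with h_J ≡ 1. Let h_j^⋆ = 1_{S_j^⋆} be the optimal stopping indicators with continuation values C_{k−1}^⋆ = C_{k−1}(X_{k−1}) = E[Y_{k}^⋆ | X_{k−1}]. Then for any k > 1 and any h_{k−1},...,h_J: 0 ≤ Q_{k−1}(h^⋆_{k−1},...,h^⋆_J) − Q_{k−1}(h_{k−1},...,h_J) ≤ Q_k(h^⋆_k,...,h^⋆_J) − Q_k(h_k,...,h_J) + E[(Z_{k−1}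 − C^⋆_{k−1})(h^⋆_{k−1}(X_{k−1}) − h_{k−1}(X_{k−1}))]. -/
open Finset MeasureTheory

/-- The randomized reward functional
`Q_k(h) = E[ Σ_{j=k}^J G_j(X_j) h_j(X_j) ∏_{l=k}^{j−1}(1 − h_l(X_l)) ]`. -/
noncomputable def rewardQ {Ω : Type*} [MeasurableSpace Ω] (μ : MeasureTheory.Measure Ω)
    (d J : ℕ) (X : ℕ → Ω → (Fin d → ℝ)) (G : ℕ → (Fin d → ℝ) → ℝ)
    (k : ℕ) (h : ℕ → (Fin d → ℝ) → ℝ) : ℝ :=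
  ∫ ω, ∑ j ∈ Icc k J, G j (X j ω) * h j (X j ω) * ∏ l ∈ Ico k j, (1 - h l (X l ω)) ∂μ

/-!
The randomized reward `R_k(H) = Σ_{j=k}^J Z_j H_j ∏_{l=k}^{j-1} (1 - H_l)` satisfies the
backward recursion `R_k = Z_k H_k + (1 - H_k) R_{k+1}`. Conditioning on `F_k` and running
the recursion backwards shows `E[R_k(H) | F_k] ≤ Y⋆_k` for every adapted `[0,1]`-valued `H`,
with equality for the optimal exercise indicators, since `Z H + (1 - H) c` is a convex
combination of `Z` and `c` and `Y⋆_k = max (Z_k, C⋆_k)`. Integrating gives the first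
inequality. For the second, expand both `Q_{k-1}` by one step of the recursion: the difference
of the two sides is `E[H_{k-1} (C⋆_{k-1} - E[R_k(H) | F_{k-1}])] ≥ 0`.
-/

section RandomizedReward

variable {Ω : Type*}

noncomputable def randomizedReward (J : ℕ) (Z H : ℕ → Ω → ℝ) (k : ℕ) (ω : Ω) : ℝ :=
  ∑ j ∈ Icc k J, Z j ω * H j ω * ∏ l ∈ Ico k j, (1 - H l ω)

lemma randomizedReward_eq_add {J k : ℕ} (hk : k ≤ J) (Z H : ℕ → Ω → ℝ) (ω : Ω) :
    randomizedReward J Z H k ω =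
      Z k ω * H k ω + (1 - H k ω) * randomizedReward J Z H (k + 1) ω := by
  rw [randomizedReward, ← Ioc_insert_left hk, sum_insert (by simp), Ico_self, prod_empty,
    mul_one, randomizedReward, mul_sum, Icc_add_one_left_eq_Ioc]
  congr 1
  refine sum_congr rfl fun j hj => ?_
  rw [← Ioo_insert_left (mem_Ioc.1 hj).1, prod_insert (by simp), Ico_add_one_left_eq_Ioo]
  ring

lemma randomizedReward_self (J : ℕ) (Z H : ℕ → Ω → ℝ) (ω : Ω) :
    randomizedReward J Z H J ω = Z J ω * H J ω := by
  simp [randomizedReward]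

lemma randomizedReward_congr {J : ℕ} {Z H H' : ℕ → Ω → ℝ} {ω : Ω}
    (h : ∀ j ≤ J, H j ω = H' j ω) (k : ℕ) :
    randomizedReward J Z H k ω = randomizedReward J Z H' k ω := by
  refine sum_congr rfl fun j hj => ?_
  have hjJ := (mem_Icc.1 hj).2
  rw [h j hjJ]
  congr 1
  exact prod_congr rfl fun l hl => by rw [h l (by have := mem_Ico.1 hl; omega)]

lemma norm_le_one_of_mem_unitInterval {x : ℝ} (hx : x ∈ unitInterval) : ‖x‖ ≤ 1 := by
  rw [Real.norm_eq_abs, abs_le]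
  exact ⟨by linarith [hx.1], hx.2⟩

lemma integrable_randomizedReward [MeasurableSpace Ω] {μ : Measure Ω} {J : ℕ}
    {Z H : ℕ → Ω → ℝ} (hZ : ∀ j, Integrable (Z j) μ) (hH : ∀ j, Measurable (H j))
    (hH01 : ∀ j ω, H j ω ∈ unitInterval) (k : ℕ) :
    Integrable (randomizedReward J Z H k) μ := by
  refine integrable_finsetSum _ fun j _ => ?_
  have hprod : ∀ ω, ∏ l ∈ Ico k j, (1 - H l ω) ∈ unitInterval := fun ω =>
    unitInterval.prod_mem fun l _ => Set.Icc.mem_iff_one_sub_mem.1 (hH01 l ω)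
  exact ((hZ j).mul_bdd (hH j).aestronglyMeasurable
    (ae_of_all _ fun ω => norm_le_one_of_mem_unitInterval (hH01 j ω))).mul_bdd
    (Finset.measurable_prod _ fun l _ => measurable_const.sub (hH l)).aestronglyMeasurable
    (ae_of_all _ fun ω => norm_le_one_of_mem_unitInterval (hprod ω))

end RandomizedReward

section Snell

variable {Ω : Type*} {m₀ : MeasurableSpace Ω} {μ : Measure Ω}

lemma integral_le_integral_of_condExp_le {m : MeasurableSpace Ω} (hm : m ≤ m₀)
    [SigmaFinite (μ.trim hm)] {f g : Ω → ℝ} (h : μ[f | m] ≤ᵐ[μ] μ[g | m]) :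
    ∫ ω, f ω ∂μ ≤ ∫ ω, g ω ∂μ := by
  rw [← integral_condExp hm (f := f), ← integral_condExp hm (f := g)]
  exact integral_mono_ae integrable_condExp integrable_condExp h

lemma condExp_le_condExp_of_condExp_le {m₁ m₂ : MeasurableSpace Ω} (hm₁₂ : m₁ ≤ m₂)
    (hm₂ : m₂ ≤ m₀) [SigmaFinite (μ.trim hm₂)] {f g : Ω → ℝ} (hg : Integrable g μ)
    (h : μ[f | m₂] ≤ᵐ[μ] g) : μ[f | m₁] ≤ᵐ[μ] μ[g | m₁] :=
  (condExp_condExp_of_le hm₁₂ hm₂).symm.le.trans (condExp_mono integrable_condExp hg h)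

lemma mul_add_one_sub_mul_le_max {t x y : ℝ} (ht : t ∈ unitInterval) :
    x * t + (1 - t) * y ≤ max x y := by
  nlinarith [le_max_left x y, le_max_right x y, ht.1, ht.2]

variable {F : Filtration ℕ m₀} {J : ℕ} {Z Y : ℕ → Ω → ℝ}

noncomputable def optimalExercise (μ : Measure Ω) (F : Filtration ℕ m₀) (J : ℕ)
    (Z Y : ℕ → Ω → ℝ) (j : ℕ) (ω : Ω) : ℝ :=
  if J ≤ j ∨ μ[Y (j + 1) | F j] ω ≤ Z j ω then 1 else 0

lemma optimalExercise_mem_unitInterval (j : ℕ) (ω : Ω) :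
    optimalExercise μ F J Z Y j ω ∈ unitInterval := by
  unfold optimalExercise
  split_ifs
  exacts [unitInterval.one_mem, unitInterval.zero_mem]

lemma adapted_optimalExercise (hZ : Adapted F Z) : Adapted F (optimalExercise μ F J Z Y) :=
  fun j => Measurable.ite ((MeasurableSet.const _).union
    (measurableSet_le stronglyMeasurable_condExp.measurable (hZ j))) measurable_const
    measurable_const

lemma integrable_snell (hZi : ∀ j, Integrable (Z j) μ) (hYJ : Y J = Z J)
    (hY : ∀ j < J, Y j =ᵐ[μ] fun ω => max (Z j ω) (μ[Y (j + 1) | F j] ω))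
    {k : ℕ} (hk : k ≤ J) : Integrable (Y k) μ := by
  rcases hk.lt_or_eq with hk | rfl
  · exact ((hZi k).sup integrable_condExp).congr (hY k hk).symm
  · exact hYJ ▸ hZi k

variable [IsFiniteMeasure μ]

lemma condExp_randomizedReward_ae_eq {H : ℕ → Ω → ℝ} (hZ : Adapted F Z)
    (hZi : ∀ j, Integrable (Z j) μ) (hH : Adapted F H) (hH01 : ∀ j ω, H j ω ∈ unitInterval)
    {k : ℕ} (hk : k ≤ J) :
    μ[randomizedReward J Z H k | F k] =ᵐ[μ]
      fun ω => Z k ω * H k ω + (1 - H k ω) * μ[randomizedReward J Z H (k + 1) | F k] ω := by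
  have hR := integrable_randomizedReward hZi (fun j => hH.measurable) hH01 (J := J) (k + 1)
  have hZH : Integrable (fun ω => Z k ω * H k ω) μ :=
    (hZi k).mul_bdd hH.measurable.aestronglyMeasurable
      (ae_of_all _ fun ω => norm_le_one_of_mem_unitInterval (hH01 k ω))
  have hrest : Integrable (fun ω => (1 - H k ω) * randomizedReward J Z H (k + 1) ω) μ :=
    hR.bdd_mul (measurable_const.sub hH.measurable).aestronglyMeasurable
      (ae_of_all _ fun ω => norm_le_one_of_mem_unitInterval
        (Set.Icc.mem_iff_one_sub_mem.1 (hH01 k ω)))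
  have hsplit : randomizedReward J Z H k =
      (fun ω => Z k ω * H k ω) + fun ω => (1 - H k ω) * randomizedReward J Z H (k + 1) ω :=
    funext (randomizedReward_eq_add hk Z H)
  have hpull : μ[fun ω => (1 - H k ω) * randomizedReward J Z H (k + 1) ω | F k] =ᵐ[μ]
      fun ω => (1 - H k ω) * μ[randomizedReward J Z H (k + 1) | F k] ω :=
    condExp_mul_of_stronglyMeasurable_left
      (measurable_const.sub (hH k)).stronglyMeasurable hrest hR
  filter_upwards [condExp_add hZH hrest (F k), hpull] with ω hadd hmul
  rw [hsplit, hadd, Pi.add_apply, hmul,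
    condExp_of_stronglyMeasurable (f := fun ω => Z k ω * H k ω) (F.le k)
    ((hZ k).mul (hH k)).stronglyMeasurable hZH]

theorem condExp_randomizedReward_le_snell {H : ℕ → Ω → ℝ} (hZ : Adapted F Z)
    (hZi : ∀ j, Integrable (Z j) μ) (hZJ : ∀ ω, 0 ≤ Z J ω) (hH : Adapted F H)
    (hH01 : ∀ j ω, H j ω ∈ unitInterval) (hYJ : Y J = Z J)
    (hY : ∀ j < J, Y j =ᵐ[μ] fun ω => max (Z j ω) (μ[Y (j + 1) | F j] ω))
    {k : ℕ} (hk : k ≤ J) : μ[randomizedReward J Z H k | F k] ≤ᵐ[μ] Y k := by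
  induction hk using Nat.decreasingInduction with
  | self =>
    have hRJ : randomizedReward J Z H J = fun ω => Z J ω * H J ω :=
      funext (randomizedReward_self J Z H)
    rw [hRJ, hYJ, condExp_of_stronglyMeasurable (f := fun ω => Z J ω * H J ω) (F.le J)
      ((hZ J).mul (hH J)).stronglyMeasurable
      (hRJ ▸ integrable_randomizedReward hZi (fun j => hH.measurable) hH01 J)]
    exact ae_of_all _ fun ω => mul_le_of_le_one_right (hZJ ω) (hH01 J ω).2
  | of_succ k hk ih =>
    have hcont := condExp_le_condExp_of_condExp_le (F.mono k.le_succ) (F.le (k + 1))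
      (integrable_snell hZi hYJ hY hk) ih
    filter_upwards [condExp_randomizedReward_ae_eq hZ hZi hH hH01 hk.le, hcont, hY k hk]
      with ω hstep hc hmax
    rw [hstep, hmax]
    calc Z k ω * H k ω + (1 - H k ω) * μ[randomizedReward J Z H (k + 1) | F k] ω
        ≤ Z k ω * H k ω + (1 - H k ω) * μ[Y (k + 1) | F k] ω := by
          gcongr
          linarith [(hH01 k ω).2]
      _ ≤ _ := mul_add_one_sub_mul_le_max (hH01 k ω)

theorem condExp_randomizedReward_optimalExercise (hZ : Adapted F Z)
    (hZi : ∀ j, Integrable (Z j) μ) (hYJ : Y J = Z J)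
    (hY : ∀ j < J, Y j =ᵐ[μ] fun ω => max (Z j ω) (μ[Y (j + 1) | F j] ω))
    {k : ℕ} (hk : k ≤ J) :
    μ[randomizedReward J Z (optimalExercise μ F J Z Y) k | F k] =ᵐ[μ] Y k := by
  set U := optimalExercise μ F J Z Y
  induction hk using Nat.decreasingInduction with
  | self =>
    have hRJ : randomizedReward J Z U J = Z J := funext fun ω => by
      simp [randomizedReward_self, U, optimalExercise]
    rw [hRJ, hYJ, condExp_of_stronglyMeasurable (F.le J) (hZ J).stronglyMeasurable (hZi J)]
  | of_succ k hk ih =>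
    have hcont := (condExp_condExp_of_le (F.mono k.le_succ) (F.le (k + 1))).symm.trans
      (condExp_congr_ae ih)
    filter_upwards [condExp_randomizedReward_ae_eq hZ hZi (adapted_optimalExercise hZ)
      optimalExercise_mem_unitInterval hk.le, hcont, hY k hk] with ω hstep hc hmax
    rw [hstep, hc, hmax]
    by_cases hle : μ[Y (k + 1) | F k] ω ≤ Z k ω
    · simp [optimalExercise, hle]
    · simp [optimalExercise, hle, hk.not_ge, (not_le.1 hle).le]

theorem integral_randomizedReward_sub_le {H U : ℕ → Ω → ℝ} (hZ : Adapted F Z)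
    (hZi : ∀ j, Integrable (Z j) μ) (hH : Adapted F H) (hH01 : ∀ j ω, H j ω ∈ unitInterval)
    (hU : Adapted F U) (hU01 : ∀ j ω, U j ω ∈ unitInterval) {a : ℕ} (ha : a < J)
    (hYi : Integrable (Y (a + 1)) μ)
    (hUY : μ[randomizedReward J Z U (a + 1) | F (a + 1)] =ᵐ[μ] Y (a + 1))
    (hHY : μ[randomizedReward J Z H (a + 1) | F (a + 1)] ≤ᵐ[μ] Y (a + 1)) :
    ∫ ω, randomizedReward J Z U a ω ∂μ - ∫ ω, randomizedReward J Z H a ω ∂μ ≤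
      ∫ ω, randomizedReward J Z U (a + 1) ω ∂μ - ∫ ω, randomizedReward J Z H (a + 1) ω ∂μ +
        ∫ ω, (Z a ω - μ[Y (a + 1) | F a] ω) * (U a ω - H a ω) ∂μ := by
  set C := μ[Y (a + 1) | F a]
  set W := μ[randomizedReward J Z U (a + 1) | F a]
  set V := μ[randomizedReward J Z H (a + 1) | F a]
  have hW : W =ᵐ[μ] C := (condExp_condExp_of_le (F.mono a.le_succ) (F.le (a + 1))).symm.trans
    (condExp_congr_ae hUY)
  have hV : V ≤ᵐ[μ] C :=
    condExp_le_condExp_of_condExp_le (F.mono a.le_succ) (F.le (a + 1)) hYi hHY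
  have hstepU : μ[randomizedReward J Z U a | F a] =ᵐ[μ]
      fun ω => Z a ω * U a ω + (1 - U a ω) * W ω :=
    condExp_randomizedReward_ae_eq hZ hZi hU hU01 ha.le
  have hstepH : μ[randomizedReward J Z H a | F a] =ᵐ[μ]
      fun ω => Z a ω * H a ω + (1 - H a ω) * V ω :=
    condExp_randomizedReward_ae_eq hZ hZi hH hH01 ha.le
  have hiU := integrable_condExp.congr hstepU
  have hiH := integrable_condExp.congr hstepH
  have hWi : Integrable W μ := integrable_condExp
  have hVi : Integrable V μ := integrable_condExp
  have hgap : Integrable (fun ω => (Z a ω - C ω) * (U a ω - H a ω)) μ :=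
    ((hZi a).sub integrable_condExp).mul_bdd
      (hU.measurable.sub hH.measurable).aestronglyMeasurable (c := 1)
      (ae_of_all _ fun ω => by
        rw [Real.norm_eq_abs, abs_le]
        constructor <;> linarith [(hU01 a ω).1, (hU01 a ω).2, (hH01 a ω).1, (hH01 a ω).2])
  rw [← integral_condExp (F.le a) (f := randomizedReward J Z U a), integral_congr_ae hstepU,
    ← integral_condExp (F.le a) (f := randomizedReward J Z H a), integral_congr_ae hstepH,
    ← integral_condExp (F.le a) (f := randomizedReward J Z U (a + 1)),
    ← integral_condExp (F.le a) (f := randomizedReward J Z H (a + 1))]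
  have hmono : ∫ ω, Z a ω * U a ω + (1 - U a ω) * W ω + V ω ∂μ ≤
      ∫ ω, Z a ω * H a ω + (1 - H a ω) * V ω + W ω +
        (Z a ω - C ω) * (U a ω - H a ω) ∂μ := by
    refine integral_mono_ae (hiU.add hVi) ((hiH.add hWi).add hgap) ?_
    filter_upwards [hW, hV] with ω hWω hVω
    rw [hWω]
    nlinarith [(hH01 a ω).1]
  have e₁ : ∫ ω, Z a ω * U a ω + (1 - U a ω) * W ω + V ω ∂μ =
      ∫ ω, Z a ω * U a ω + (1 - U a ω) * W ω ∂μ + ∫ ω, V ω ∂μ := integral_add hiU hVi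
  have e₂ : ∫ ω, Z a ω * H a ω + (1 - H a ω) * V ω + W ω +
        (Z a ω - C ω) * (U a ω - H a ω) ∂μ =
      ∫ ω, Z a ω * H a ω + (1 - H a ω) * V ω ∂μ + ∫ ω, W ω ∂μ +
        ∫ ω, (Z a ω - C ω) * (U a ω - H a ω) ∂μ := by
    rw [integral_add (f := fun ω => Z a ω * H a ω + (1 - H a ω) * V ω + W ω) (hiH.add hWi) hgap,
      integral_add hiH hWi]
  linarith

end Snell

theorem stmt_5_general {Ω : Type*} {m : MeasurableSpace Ω} (μ : Measure Ω) [IsProbabilityMeasure μ]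
    (F : Filtration ℕ m) (d J : ℕ) (X : ℕ → Ω → (Fin d → ℝ))
    (hXad : ∀ j, Measurable[F j] (X j))
    (CZ : ℝ) (G : ℕ → (Fin d → ℝ) → ℝ) (hGmeas : ∀ j, Measurable (G j))
    (hG : ∀ j x, 0 ≤ G j x ∧ G j x ≤ CZ)
    (Y : ℕ → Ω → ℝ)
    (hYJ : Y J = fun ω => G J (X J ω))
    (hYrec : ∀ j < J, Y j =ᵐ[μ] fun ω => max (G j (X j ω)) ((μ[Y (j + 1) | F j]) ω))
    (Cfun : ℕ → (Fin d → ℝ) → ℝ)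
    (hCfun : ∀ j < J, (fun ω => Cfun j (X j ω)) =ᵐ[μ] μ[Y (j + 1) | F j])
    (hstar : ℕ → (Fin d → ℝ) → ℝ)
    (hstar_def : ∀ j < J, ∀ x, hstar j x = if Cfun j x ≤ G j x then 1 else 0)
    (hstarJ : ∀ x, hstar J x = 1)
    (k : ℕ) (hk : 1 < k) (hkJ : k ≤ J)
    (h : ℕ → (Fin d → ℝ) → ℝ) (hmeas : ∀ j, Measurable (h j))
    (hval : ∀ j x, h j x ∈ Set.Icc (0 : ℝ) 1) :
    0 ≤ rewardQ μ d J X G (k - 1) hstar - rewardQ μ d J X G (k - 1) h ∧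
    rewardQ μ d J X G (k - 1) hstar - rewardQ μ d J X G (k - 1) h ≤
      rewardQ μ d J X G k hstar - rewardQ μ d J X G k h +
        ∫ ω, (G (k - 1) (X (k - 1) ω) - Cfun (k - 1) (X (k - 1) ω)) *
          (hstar (k - 1) (X (k - 1) ω) - h (k - 1) (X (k - 1) ω)) ∂μ := by
  obtain ⟨a, rfl⟩ : ∃ a, k = a + 1 := ⟨k - 1, by omega⟩
  rw [Nat.add_sub_cancel]
  set Z : ℕ → Ω → ℝ := fun j ω => G j (X j ω)
  set U := optimalExercise μ F J Z Y
  have hZ : Adapted F Z := fun j => (hGmeas j).comp (hXad j)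
  have hZi : ∀ j, Integrable (Z j) μ := fun j => Integrable.of_bound
    hZ.measurable.aestronglyMeasurable CZ (ae_of_all _ fun ω => by
      rw [Real.norm_eq_abs, abs_of_nonneg (hG j _).1]; exact (hG j _).2)
  have hH : Adapted F fun j ω => h j (X j ω) := fun j => (hmeas j).comp (hXad j)
  have hH01 : ∀ j ω, h j (X j ω) ∈ unitInterval := fun j ω => hval j (X j ω)
  have hstar_ae : ∀ᵐ ω ∂μ, ∀ j ≤ J, hstar j (X j ω) = U j ω := by
    refine ae_all_iff.2 fun j => ?_
    rcases lt_or_ge j J with hj | hj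
    · filter_upwards [hCfun j hj] with ω hω _
      simp [U, optimalExercise, hstar_def j hj, ← hω, hj.not_ge, Z]
    · exact ae_of_all _ fun ω hjJ => by
        simp [U, optimalExercise, le_antisymm hjJ hj, hstarJ]
  have hQ : ∀ i, rewardQ μ d J X G i hstar = ∫ ω, randomizedReward J Z U i ω ∂μ := fun i =>
    integral_congr_ae (hstar_ae.mono fun ω hω =>
      randomizedReward_congr (Z := Z) (H := fun j ω => hstar j (X j ω)) hω i)
  have hgap : ∫ ω, (G a (X a ω) - Cfun a (X a ω)) * (hstar a (X a ω) - h a (X a ω)) ∂μ =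
      ∫ ω, (Z a ω - μ[Y (a + 1) | F a] ω) * (U a ω - h a (X a ω)) ∂μ := by
    refine integral_congr_ae ?_
    filter_upwards [hCfun a (by omega), hstar_ae] with ω hC hU
    simp only [Z, hC, hU a (by omega)]
  have hUY := fun i (hi : i ≤ J) =>
    condExp_randomizedReward_optimalExercise hZ hZi hYJ hYrec hi
  have hHY := fun i (hi : i ≤ J) =>
    condExp_randomizedReward_le_snell hZ hZi (fun ω => (hG J _).1) hH hH01 hYJ hYrec hi
  rw [hQ, hQ, hgap]
  exact ⟨sub_nonneg.2 (integral_le_integral_of_condExp_le (F.le a)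
      ((hHY a (by omega)).trans (hUY a (by omega)).symm.le)),
    integral_randomizedReward_sub_le hZ hZi hH hH01 (adapted_optimalExercise hZ)
      optimalExercise_mem_unitInterval (by omega) (integrable_snell hZi hYJ hYrec hkJ)
      (hUY _ hkJ) (hHY _ hkJ)⟩

/-- Proposition (one-step error, `errstep`): in the Markovian optimal stopping setting with
Snell envelope `Y⋆`, continuation value functions `C_j` (so `C_j(X_j) = E[Y⋆_{j+1}|F_j]`)
and optimal exercise indicators `h⋆_j = 1_{G_j ≥ C_j}`, `h⋆_J ≡ 1`, for any `k > 1` and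
any `[0,1]`-valued `h_{k−1},...,h_J` with `h_J ≡ 1`:
`0 ≤ Q_{k−1}(h⋆) − Q_{k−1}(h) ≤ Q_k(h⋆) − Q_k(h)
  + E[(Z_{k−1} − C⋆_{k−1})(h⋆_{k−1}(X_{k−1}) − h_{k−1}(X_{k−1}))]`. -/
theorem stmt_5 {Ω : Type*} {m : MeasurableSpace Ω} (μ : Measure Ω) [IsProbabilityMeasure μ]
    (F : Filtration ℕ m) (d J : ℕ) (X : ℕ → Ω → (Fin d → ℝ))
    (hXad : ∀ j, Measurable[F j] (X j))
    (CZ : ℝ) (G : ℕ → (Fin d → ℝ) → ℝ) (hGmeas : ∀ j, Measurable (G j))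
    (hG : ∀ j x, 0 ≤ G j x ∧ G j x ≤ CZ)
    (Y : ℕ → Ω → ℝ)
    (hYJ : Y J = fun ω => G J (X J ω))
    (hYrec : ∀ j < J, Y j =ᵐ[μ] fun ω => max (G j (X j ω)) ((μ[Y (j + 1) | F j]) ω))
    (Cfun : ℕ → (Fin d → ℝ) → ℝ)
    (hCfun : ∀ j < J, (fun ω => Cfun j (X j ω)) =ᵐ[μ] μ[Y (j + 1) | F j])
    (hstar : ℕ → (Fin d → ℝ) → ℝ)
    (hstar_def : ∀ j < J, ∀ x, hstar j x = if Cfun j x ≤ G j x then 1 else 0)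
    (hstarJ : ∀ x, hstar J x = 1)
    (k : ℕ) (hk : 1 < k) (hkJ : k ≤ J)
    (h : ℕ → (Fin d → ℝ) → ℝ) (hmeas : ∀ j, Measurable (h j))
    (hval : ∀ j x, h j x ∈ Set.Icc (0 : ℝ) 1) (hhJ : ∀ x, h J x = 1) :
    0 ≤ rewardQ μ d J X G (k - 1) hstar - rewardQ μ d J X G (k - 1) h ∧
    rewardQ μ d J X G (k - 1) hstar - rewardQ μ d J X G (k - 1) h ≤
      rewardQ μ d J X G k hstar - rewardQ μ d J X G k h +
        ∫ ω, (G (k - 1) (X (k - 1) ω) - Cfun (k - 1) (X (k - 1) ω)) *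
          (hstar (k - 1) (X (k - 1) ω) - h (k - 1) (X (k - 1) ω)) ∂μ :=
  stmt_5_general μ F d J X hXad CZ G hGmeas hG Y hYJ hYrec Cfun hCfun hstar hstar_def hstarJ k hk
    hkJ h hmeas hval
end

section
/- Backward construction preserves conditional exercise probabilities: suppose τ_k is a randomized stopping time with values in {k,...,J} and conditional probabilities p_{k,j} = E[1_{{τ_k=j}}|F_j]. Let U ~ Uniform[0,1] be independent of F ∨ σ(τ_k), h_{k−1} : ℝ^d → [0,1] measurable, X_{k−1} F_{k−1}-measurable, and define τ_{k−1} = k−1 if U < h_{k−1}(X_{k−1}) and τ_{k−1} = τ_k otherwise. Then E[1_{{τ_{k−1}=j}} | F_j] = (1 − h_{k−1}(X_{k−1})) p_{k,j} for all j ≥ k, and E[1_{{τ_{k−1}=k−1}} | F_{k−1}] = h_{k−1}(X_{k−1}). -/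
/-!
Let `G = F ∨ σ(τ_k)`. For every `G`-measurable `V` with values in `[0,1]`, the uniform `U`,
being independent of `G`, satisfies `P(U < V | G) = V`: on a set `s ∈ G`, the joint law of
`U` and `(V, 1_s)` is a product, so by Fubini `U` can be integrated out first, and
`P(U < v) = v`. Now `{τ_{k-1} = k-1} = {U < h(X)}` and, for `j ≥ k`,
`{τ_{k-1} = j} = {τ_k = j} ∩ {U ≥ h(X)}`. Since `F_j ⊆ G` and `h(X)` is `F_j`-measurable for
`j ≥ k-1`, the tower property followed by pulling out `1 - h(X)` gives both identities.
-/

open MeasureTheory ProbabilityTheory Set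

lemma integral_indicator_Iio_restrict_unitInterval {t : ℝ} (ht : t ∈ Icc (0 : ℝ) 1) :
    ∫ u, (Iio t).indicator (fun _ => (1 : ℝ)) u ∂(volume.restrict (Icc (0 : ℝ) 1)) = t := by
  have hset : Iio t ∩ Icc (0 : ℝ) 1 = Ico 0 t := by
    ext u; simp only [mem_inter_iff, mem_Iio, mem_Icc, mem_Ico]
    constructor
    · rintro ⟨hut, h0u, -⟩; exact ⟨h0u, hut⟩
    · rintro ⟨h0u, hut⟩; exact ⟨hut, h0u, hut.le.trans ht.2⟩
  rw [integral_indicator_const _ measurableSet_Iio, measureReal_restrict_apply measurableSet_Iio,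
    hset, Real.volume_real_Ico_of_le ht.1, smul_eq_mul, mul_one, sub_zero]

lemma integrable_of_mem_Icc_zero_one {Ω : Type*} {mΩ : MeasurableSpace Ω} {μ : Measure Ω}
    [IsFiniteMeasure μ] {V : Ω → ℝ} (hV : Measurable V) (hV01 : ∀ ω, V ω ∈ Icc (0 : ℝ) 1) :
    Integrable V μ :=
  .of_bound hV.aestronglyMeasurable 1
    (.of_forall fun ω => by simpa [abs_of_nonneg (hV01 ω).1] using (hV01 ω).2)

lemma ProbabilityTheory.IndepFun.integral_comp_eq_integral_integral_map {Ω α β : Type*}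
    {mΩ : MeasurableSpace Ω} [MeasurableSpace α] [MeasurableSpace β] {μ : Measure Ω}
    [IsFiniteMeasure μ]
    {U : Ω → α} {Y : Ω → β} (hUY : IndepFun U Y μ) (hU : Measurable U) (hY : Measurable Y)
    {f : α × β → ℝ} (hf : StronglyMeasurable f) (hint : Integrable (fun ω => f (U ω, Y ω)) μ) :
    ∫ ω, f (U ω, Y ω) ∂μ = ∫ ω, ∫ u, f (u, Y ω) ∂(μ.map U) ∂μ := by
  have hmap := (indepFun_iff_map_prod_eq_prod_map_map hU.aemeasurable hY.aemeasurable).mp hUY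
  have hUYm : Measurable fun ω => (U ω, Y ω) := hU.prodMk hY
  have hint' : Integrable f ((μ.map U).prod (μ.map Y)) := by
    rwa [← hmap, integrable_map_measure hf.aestronglyMeasurable hUYm.aemeasurable]
  calc ∫ ω, f (U ω, Y ω) ∂μ = ∫ q, f q ∂((μ.map U).prod (μ.map Y)) := by
        rw [← hmap, integral_map hUYm.aemeasurable hf.aestronglyMeasurable]
    _ = ∫ y, ∫ u, f (u, y) ∂(μ.map U) ∂(μ.map Y) := integral_prod_symm f hint'
    _ = ∫ ω, ∫ u, f (u, Y ω) ∂(μ.map U) ∂μ :=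
        integral_map hY.aemeasurable hf.integral_prod_left'.aestronglyMeasurable

section UniformRandomization

variable {Ω : Type*} {m mG mΩ : MeasurableSpace Ω} {μ : Measure Ω} [IsProbabilityMeasure μ]
  {U V : Ω → ℝ}

lemma condExp_indicator_lt_of_indep_uniform (hG : mG ≤ mΩ) (hU : Measurable U)
    (hUunif : μ.map U = volume.restrict (Icc 0 1))
    (hindep : Indep (MeasurableSpace.comap U (borel ℝ)) mG μ)
    (hV : Measurable[mG] V) (hV01 : ∀ ω, V ω ∈ Icc (0 : ℝ) 1) :
    μ[{ω | U ω < V ω}.indicator (fun _ => (1 : ℝ)) | mG] =ᵐ[μ] V := by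
  refine (ae_eq_condExp_of_forall_setIntegral_eq hG
    ((integrable_const 1).indicator (measurableSet_lt hU (hV.mono hG le_rfl)))
    (fun s _ _ => (integrable_of_mem_Icc_zero_one (hV.mono hG le_rfl) hV01).integrableOn)
    (fun s hs _ => ?_) hV.aestronglyMeasurable).symm
  set Y : Ω → ℝ × ℝ := fun ω => (V ω, s.indicator (fun _ => 1) ω)
  have hY : Measurable[mG] Y := hV.prodMk (measurable_const.indicator hs)
  have hUY : IndepFun U Y μ :=
    (IndepFun_iff_Indep U Y μ).2 (indep_of_indep_of_le_right hindep hY.comap_le)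
  set f : ℝ × (ℝ × ℝ) → ℝ := fun q => q.2.2 * (Iio q.2.1).indicator (fun _ => 1) q.1
  have hf : Measurable f :=
    measurable_snd.snd.mul
      (measurable_const.indicator (measurableSet_lt measurable_fst measurable_snd.fst))
  have hA : MeasurableSet {ω | U ω < V ω} := measurableSet_lt hU (hV.mono hG le_rfl)
  have hfUY :
      ∀ ω, f (U ω, Y ω) = s.indicator ({ω | U ω < V ω}.indicator (fun _ => 1)) ω := by
    intro ω
    by_cases hωs : ω ∈ s <;> by_cases hlt : U ω < V ω <;> simp [f, Y, hωs, hlt]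
  have hint : Integrable (fun ω => f (U ω, Y ω)) μ := by
    simp_rw [hfUY]
    exact ((integrable_const 1).indicator hA).indicator (hG s hs)
  have hinner : ∀ ω, ∫ u, f (u, Y ω) ∂(μ.map U) = s.indicator V ω := by
    intro ω
    rw [hUunif, integral_const_mul, integral_indicator_Iio_restrict_unitInterval (hV01 ω)]
    by_cases hωs : ω ∈ s <;> simp [hωs]
  calc ∫ ω in s, V ω ∂μ = ∫ ω, ∫ u, f (u, Y ω) ∂(μ.map U) ∂μ := by
        simp_rw [hinner, integral_indicator (hG s hs)]
    _ = ∫ ω, f (U ω, Y ω) ∂μ :=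
      (hUY.integral_comp_eq_integral_integral_map hU (hY.mono hG le_rfl) hf.stronglyMeasurable
        hint).symm
    _ = ∫ ω in s, {ω | U ω < V ω}.indicator (fun _ => (1 : ℝ)) ω ∂μ := by
        simp_rw [hfUY, integral_indicator (hG s hs)]

lemma condExp_indicator_lt_of_indep_uniform_of_le (hm : m ≤ mG) (hG : mG ≤ mΩ)
    (hU : Measurable U) (hUunif : μ.map U = volume.restrict (Icc 0 1))
    (hindep : Indep (MeasurableSpace.comap U (borel ℝ)) mG μ)
    (hV : Measurable[m] V) (hV01 : ∀ ω, V ω ∈ Icc (0 : ℝ) 1) :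
    μ[{ω | U ω < V ω}.indicator (fun _ => (1 : ℝ)) | m] =ᵐ[μ] V :=
  calc μ[{ω | U ω < V ω}.indicator (fun _ => (1 : ℝ)) | m]
      =ᵐ[μ] μ[μ[{ω | U ω < V ω}.indicator (fun _ => (1 : ℝ)) | mG] | m] :=
        (condExp_condExp_of_le hm hG).symm
    _ =ᵐ[μ] μ[V | m] := condExp_congr_ae
        (condExp_indicator_lt_of_indep_uniform hG hU hUunif hindep (hV.mono hm le_rfl) hV01)
    _ = V := condExp_of_stronglyMeasurable (hm.trans hG) hV.stronglyMeasurable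
        (integrable_of_mem_Icc_zero_one (hV.mono (hm.trans hG) le_rfl) hV01)

lemma condExp_indicator_inter_not_lt_of_indep_uniform (hm : m ≤ mG) (hG : mG ≤ mΩ)
    (hU : Measurable U) (hUunif : μ.map U = volume.restrict (Icc 0 1))
    (hindep : Indep (MeasurableSpace.comap U (borel ℝ)) mG μ)
    (hV : Measurable[m] V) (hV01 : ∀ ω, V ω ∈ Icc (0 : ℝ) 1)
    {B : Set Ω} (hB : MeasurableSet[mG] B) :
    μ[(B ∩ {ω | U ω < V ω}ᶜ).indicator (fun _ => (1 : ℝ)) | m]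
      =ᵐ[μ] fun ω => (1 - V ω) * μ[B.indicator (fun _ => (1 : ℝ)) | m] ω := by
  set A := {ω | U ω < V ω}
  set χ : Set Ω → Ω → ℝ := fun s => s.indicator (fun _ => 1)
  have hA : MeasurableSet A := measurableSet_lt hU (hV.mono (hm.trans hG) le_rfl)
  have hBΩ : MeasurableSet B := hG B hB
  have hsplit : χ (B ∩ Aᶜ) = χ B - χ B * χ A := by
    ext ω
    by_cases hωB : ω ∈ B <;> by_cases hωA : ω ∈ A <;> simp [χ, hωB, hωA]
  have hVbound : ∀ᵐ ω ∂μ, ‖1 - V ω‖ ≤ 1 := .of_forall fun ω => by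
    rw [Real.norm_eq_abs, abs_le]; constructor <;> linarith [(hV01 ω).1, (hV01 ω).2]
  have hB_int : Integrable (χ B) μ := (integrable_const 1).indicator hBΩ
  have hA_int : Integrable (χ A) μ := (integrable_const 1).indicator hA
  have hBA_int : Integrable (χ B * χ A) μ := by
    rw [show χ B * χ A = χ (B ∩ A) from inter_indicator_one.symm]
    exact (integrable_const 1).indicator (hBΩ.inter hA)
  have hVB_int : Integrable ((fun ω => 1 - V ω) * χ B) μ :=
    hB_int.bdd_mul (measurable_const.sub (hV.mono (hm.trans hG) le_rfl)).aestronglyMeasurable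
      hVbound
  have hcondG : μ[χ (B ∩ Aᶜ) | mG] =ᵐ[μ] (fun ω => 1 - V ω) * χ B := by
    have hB_condG : μ[χ B | mG] = χ B :=
      condExp_of_stronglyMeasurable hG (measurable_const.indicator hB).stronglyMeasurable hB_int
    have hBA_condG : μ[χ B * χ A | mG] =ᵐ[μ] χ B * V :=
      (condExp_mul_of_stronglyMeasurable_left (measurable_const.indicator hB).stronglyMeasurable
        hBA_int hA_int).trans ((condExp_indicator_lt_of_indep_uniform hG hU hUunif hindep
          (hV.mono hm le_rfl) hV01).mono fun ω hω => by simp only [Pi.mul_apply, A, χ, hω])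
    rw [hsplit]
    filter_upwards [condExp_sub hB_int hBA_int mG, hBA_condG] with ω hsub hBA
    simp only [hsub, Pi.sub_apply, hB_condG, hBA, Pi.mul_apply]
    ring
  calc μ[χ (B ∩ Aᶜ) | m]
      =ᵐ[μ] μ[μ[χ (B ∩ Aᶜ) | mG] | m] := (condExp_condExp_of_le hm hG).symm
    _ =ᵐ[μ] μ[(fun ω => 1 - V ω) * χ B | m] := condExp_congr_ae hcondG
    _ =ᵐ[μ] (fun ω => 1 - V ω) * μ[χ B | m] :=
        condExp_mul_of_stronglyMeasurable_left
          (measurable_const.sub hV).stronglyMeasurable hVB_int hB_int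

end UniformRandomization

theorem stmt_11_general {Ω : Type*} {m : MeasurableSpace Ω} (μ : Measure Ω) [IsProbabilityMeasure μ]
    (d J k : ℕ) (hk : 1 ≤ k)
    (mF : MeasurableSpace Ω) (hmF : mF ≤ m)
    (F : MeasureTheory.Filtration ℕ m) (hFmF : ∀ j, F j ≤ mF)
    (τk : Ω → ℕ) (hτmeas : Measurable[m] τk) (hτrange : ∀ ω, τk ω ∈ Set.Icc k J)
    (U : Ω → ℝ) (hUmeas : Measurable[m] U)
    (hUuniform : (@Measure.map Ω ℝ m _ U μ) = volume.restrict (Set.Icc (0 : ℝ) 1))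
    (hUindep : @Indep Ω (MeasurableSpace.comap U (borel ℝ))
      (mF ⊔ MeasurableSpace.comap τk (⊤ : MeasurableSpace ℕ)) m μ)
    (X : Ω → (Fin d → ℝ)) (hXmeas : Measurable[F (k - 1)] X)
    (h : (Fin d → ℝ) → ℝ) (hmeas : Measurable h) (hval : ∀ x, h x ∈ Set.Icc (0 : ℝ) 1)
    (τ' : Ω → ℕ) (hτ' : ∀ ω, τ' ω = if U ω < h (X ω) then k - 1 else τk ω)
    (p : ℕ → Ω → ℝ)
    (hp : ∀ j, p j = μ[Set.indicator {ω | τk ω = j} (fun _ => (1 : ℝ)) | F j]) :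
    (∀ j, k ≤ j →
      μ[Set.indicator {ω | τ' ω = j} (fun _ => (1 : ℝ)) | F j]
        =ᵐ[μ] fun ω => (1 - h (X ω)) * p j ω) ∧
    μ[Set.indicator {ω | τ' ω = k - 1} (fun _ => (1 : ℝ)) | F (k - 1)]
      =ᵐ[μ] fun ω => h (X ω) := by
  set G := mF ⊔ MeasurableSpace.comap τk (⊤ : MeasurableSpace ℕ)
  have hG : G ≤ m := sup_le hmF hτmeas.comap_le
  have hFG : ∀ j, F j ≤ G := fun j => (hFmF j).trans le_sup_left
  have hhX : ∀ j, k - 1 ≤ j → Measurable[F j] fun ω => h (X ω) :=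
    fun j hj => hmeas.comp (hXmeas.mono (F.mono hj) le_rfl)
  have hτ'_lt : ∀ ω, U ω < h (X ω) → τ' ω = k - 1 := fun ω hlt => by simp [hτ' ω, hlt]
  have hτ'_not_lt : ∀ ω, ¬ U ω < h (X ω) → τ' ω = τk ω := fun ω hlt => by simp [hτ' ω, hlt]
  constructor
  · intro j hj
    have hset : {ω | τ' ω = j} = {ω | τk ω = j} ∩ {ω | U ω < h (X ω)}ᶜ := by
      ext ω
      by_cases hlt : U ω < h (X ω)
      · simp only [mem_ofPred_eq, mem_inter_iff, mem_compl_iff, hτ'_lt ω hlt, hlt,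
          not_true_eq_false, and_false, iff_false]
        omega
      · simp [hτ'_not_lt ω hlt, hlt]
    rw [hset, hp j]
    exact condExp_indicator_inter_not_lt_of_indep_uniform (hFG j) hG hUmeas hUuniform hUindep
      (hhX j (by omega)) (fun ω => hval _)
      (le_sup_right (α := MeasurableSpace Ω) _ ⟨{j}, trivial, rfl⟩)
  · have hset : {ω | τ' ω = k - 1} = {ω | U ω < h (X ω)} := by
      ext ω
      by_cases hlt : U ω < h (X ω)
      · simp [hτ'_lt ω hlt, hlt]
      · simp only [mem_ofPred_eq, hτ'_not_lt ω hlt, hlt, iff_false]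
        have := (hτrange ω).1
        omega
    rw [hset]
    exact condExp_indicator_lt_of_indep_uniform_of_le (hFG _) hG hUmeas hUuniform hUindep
      (hhX _ le_rfl) (fun ω => hval _)

/-- Backward construction preserves conditional exercise probabilities: if `τ_k` is a
randomized stopping time with values in `{k,...,J}` and conditional probabilities
`p_{k,j} = E[1_{τ_k=j}|F_j]`, `U ~ Uniform[0,1]` is independent of `F ∨ σ(τ_k)`,
`X_{k−1}` is `F_{k−1}`-measurable, `h_{k−1} : ℝ^d → [0,1]` is measurable, and
`τ_{k−1} = k−1` if `U < h_{k−1}(X_{k−1})`, `τ_{k−1} = τ_k` otherwise, then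
`E[1_{τ_{k−1}=j} | F_j] = (1 − h_{k−1}(X_{k−1})) p_{k,j}` a.s. for `j ≥ k`, and
`E[1_{τ_{k−1}=k−1} | F_{k−1}] = h_{k−1}(X_{k−1})` a.s. -/
theorem stmt_11 {Ω : Type*} {m : MeasurableSpace Ω} (μ : Measure Ω) [IsProbabilityMeasure μ]
    (d J k : ℕ) (hk : 1 ≤ k) (hkJ : k ≤ J)
    (mF : MeasurableSpace Ω) (hmF : mF ≤ m)
    (F : MeasureTheory.Filtration ℕ m) (hFmF : ∀ j, F j ≤ mF)
    (τk : Ω → ℕ) (hτmeas : Measurable[m] τk) (hτrange : ∀ ω, τk ω ∈ Set.Icc k J)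
    (U : Ω → ℝ) (hUmeas : Measurable[m] U)
    (hUuniform : (@Measure.map Ω ℝ m _ U μ) = volume.restrict (Set.Icc (0 : ℝ) 1))
    (hUindep : @Indep Ω (MeasurableSpace.comap U (borel ℝ))
      (mF ⊔ MeasurableSpace.comap τk (⊤ : MeasurableSpace ℕ)) m μ)
    (X : Ω → (Fin d → ℝ)) (hXmeas : Measurable[F (k - 1)] X)
    (h : (Fin d → ℝ) → ℝ) (hmeas : Measurable h) (hval : ∀ x, h x ∈ Set.Icc (0 : ℝ) 1)
    (τ' : Ω → ℕ) (hτ' : ∀ ω, τ' ω = if U ω < h (X ω) then k - 1 else τk ω)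
    (p : ℕ → Ω → ℝ)
    (hp : ∀ j, p j = μ[Set.indicator {ω | τk ω = j} (fun _ => (1 : ℝ)) | F j]) :
    (∀ j, k ≤ j →
      μ[Set.indicator {ω | τ' ω = j} (fun _ => (1 : ℝ)) | F j]
        =ᵐ[μ] fun ω => (1 - h (X ω)) * p j ω) ∧
    μ[Set.indicator {ω | τ' ω = k - 1} (fun _ => (1 : ℝ)) | F (k - 1)]
      =ᵐ[μ] fun ω => h (X ω) :=
  stmt_11_general μ d J k hk mF hmF F hFmF τk hτmeas hτrange U hUmeas hUuniform hUindep X hXmeas h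
    hmeas hval τ' hτ' p hp
end
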